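/- Let d, g : ℂ → ℂ be functions and let 𝓕ₙ be the associated generalized Fibonacci polynomials of Fibonacci type over ℂ. Let n ≥ 2 and let r, s ∈ ℂ with s ≠ 0, s² = g(r) (in particular g(r) ≠ 0). If d(r)/s = 2i·cos(jπ/n) for some integer j with 1 ≤ j ≤ n − 1, then r is a root of 𝓕ₙ, i.e. 𝓕ₙ(r) = 0. -/

import Mathlib

/-!
With `c = i s`, the hypotheses say `d(r) = 2 cos θ · c` and `g(r) = -c²` for `θ = jπ/n`. The
recurrence of `𝓕ₖ(r)` is then that of `cᵏ sin(kθ) / (c sin θ)`, the Chebyshev polynomials of the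
second kind, so `𝓕ₙ(r) · c sin θ = cⁿ sin(jπ) = 0`, while `c sin θ ≠ 0` because `0 < θ < π`.
-/

open Complex
open scoped Real

/-- Generalized Fibonacci polynomials of Fibonacci type over `ℂ`:
`𝓕₀ = 0`, `𝓕₁ = 1`, `𝓕ₙ = d·𝓕ₙ₋₁ + g·𝓕ₙ₋₂`. -/
noncomputable def GFPFC (d g : ℂ → ℂ) : ℕ → ℂ → ℂ
  | 0 => fun _ => 0
  | 1 => fun _ => 1
  | n + 2 => fun x => d x * GFPFC d g (n + 1) x + g x * GFPFC d g n x

theorem Complex.sin_nat_add_two_mul (k : ℕ) (θ : ℂ) :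
    sin ((k + 2 : ℕ) * θ) = 2 * cos θ * sin ((k + 1 : ℕ) * θ) - sin (k * θ) := by
  have hadd : ((k + 2 : ℕ) : ℂ) * θ = (k + 1 : ℕ) * θ + θ := by push_cast; ring
  have hsub : (k : ℂ) * θ = (k + 1 : ℕ) * θ - θ := by push_cast; ring
  rw [hadd, hsub, sin_add, sin_sub]
  ring

theorem Complex.sin_nat_mul_pi_div_ne_zero {j n : ℕ} (hj : 0 < j) (hjn : j < n) :
    sin (j * π / n) ≠ 0 := by
  have hθ : (j : ℂ) * π / n = ((j * Real.pi / n : ℝ) : ℂ) := by push_cast; ring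
  rw [hθ, ← ofReal_sin, ofReal_ne_zero]
  have hn : (0 : ℝ) < n := by exact_mod_cast hj.trans hjn
  refine (Real.sin_pos_of_pos_of_lt_pi (by positivity) ?_).ne'
  rw [div_lt_iff₀ hn]
  have : (j : ℝ) < n := by exact_mod_cast hjn
  nlinarith [Real.pi_pos]

theorem GFPFC_add_two (d g : ℂ → ℂ) (k : ℕ) (x : ℂ) :
    GFPFC d g (k + 2) x = d x * GFPFC d g (k + 1) x + g x * GFPFC d g k x :=
  rfl

theorem GFPFC_mul_sin {d g : ℂ → ℂ} {x c θ : ℂ} (hd : d x = 2 * cos θ * c)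
    (hg : g x = -c ^ 2) (k : ℕ) :
    GFPFC d g k x * c * sin θ = c ^ k * sin (k * θ) := by
  induction k using Nat.twoStepInduction with
  | zero => simp [GFPFC]
  | one => simp [GFPFC]
  | more k ih₀ ih₁ =>
    calc GFPFC d g (k + 2) x * c * sin θ
        = d x * (GFPFC d g (k + 1) x * c * sin θ) + g x * (GFPFC d g k x * c * sin θ) := by
          rw [GFPFC_add_two]; ring
      _ = c ^ (k + 2) * sin ((k + 2 : ℕ) * θ) := by
          rw [ih₀, ih₁, hd, hg, sin_nat_add_two_mul]; ring

theorem gfpfc_roots_general (d g : ℂ → ℂ) (n : ℕ)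
    (r s : ℂ) (hs : s ≠ 0) (hsg : s ^ 2 = g r)
    (hroot : ∃ j : ℕ, 1 ≤ j ∧ j ≤ n - 1 ∧
      d r / s = 2 * Complex.I * Complex.cos ((j : ℂ) * (Real.pi : ℂ) / (n : ℂ))) :
    GFPFC d g n r = 0 := by
  obtain ⟨j, hj, hjn, hdr⟩ := hroot
  set θ : ℂ := j * π / n
  have hn : (n : ℂ) ≠ 0 := by norm_cast; omega
  have hd : d r = 2 * cos θ * (I * s) := by
    rw [div_eq_iff hs] at hdr; rw [hdr]; ring
  have hg : g r = -(I * s) ^ 2 := by rw [← hsg, mul_pow, I_sq]; ring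
  have hsin : sin (n * θ) = 0 := by
    rw [show (n : ℂ) * θ = j * π by simp only [θ]; field_simp, sin_nat_mul_pi]
  have key := GFPFC_mul_sin hd hg n
  rw [hsin, mul_zero] at key
  have hθ : sin θ ≠ 0 := sin_nat_mul_pi_div_ne_zero hj (by omega)
  simpa [hs, hθ, I_ne_zero] using key

theorem gfpfc_roots (d g : ℂ → ℂ) (n : ℕ) (hn : 2 ≤ n)
    (r s : ℂ) (hs : s ≠ 0) (hsg : s ^ 2 = g r)
    (hroot : ∃ j : ℕ, 1 ≤ j ∧ j ≤ n - 1 ∧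
      d r / s = 2 * Complex.I * Complex.cos ((j : ℂ) * (Real.pi : ℂ) / (n : ℂ))) :
    GFPFC d g n r = 0 :=
  gfpfc_roots_general d g n r s hs hsg hroot
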